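/- arXiv:1903.07469 — 6 statements merged into one kernel-verified Lean document; each statement's English description precedes it below -/
import Mathlib

section
/- Let A be an n×n real matrix, b ∈ ℝⁿ, and let (I, J) be a computable projection for the system A x = b. If x ∈ ℝⁿ satisfies x j = 0 for every j ∉ J and (A.mulVec x) i = b i for every i ∈ I, then A.mulVec x = b, i.e. x solves the full system. -/
theorem stmt_1 {n : ℕ} (A : Matrix (Fin n) (Fin n) ℝ) (b : Fin n → ℝ)
    (I J : Set (Fin n))
    (hI : ∀ i, b i ≠ 0 → i ∈ I)
    (hJI : ∀ i j, j ∈ J → A i j ≠ 0 → i ∈ I)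
    (hIJ : ∀ i j, i ∈ I → A i j ≠ 0 → j ∈ J)
    (x : Fin n → ℝ)
    (hx0 : ∀ j, j ∉ J → x j = 0)
    (hxI : ∀ i, i ∈ I → A.mulVec x i = b i) :
    A.mulVec x = b := by
  funext i
  by_cases hi : i ∈ I
  · exact hxI i hi
  · have hb : b i = 0 := by
      by_contra h; exact hi (hI i h)
    rw [hb, Matrix.mulVec, dotProduct]
    apply Finset.sum_eq_zero
    intro j _
    by_cases hj : j ∈ J
    · have : A i j = 0 := by
        by_contra h; exact hi (hJI i j hj h)
      simp [this]
    · simp [hx0 j hj]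
end

section
/- Let A be an n×n real matrix, b ∈ ℝⁿ, and let (I, J) be a computable projection for the system A x = b. Then the system A x = b has a solution if and only if there exists x ∈ ℝⁿ with x j = 0 for every j ∉ J and (A.mulVec x) i = b i for every i ∈ I (i.e. the projected system A_{I,J} y = b_I has a solution). -/
theorem stmt_2 {n : ℕ} (A : Matrix (Fin n) (Fin n) ℝ) (b : Fin n → ℝ)
    (I J : Set (Fin n))
    (hI : ∀ i, b i ≠ 0 → i ∈ I)
    (hJI : ∀ i j, j ∈ J → A i j ≠ 0 → i ∈ I)
    (hIJ : ∀ i j, i ∈ I → A i j ≠ 0 → j ∈ J) :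
    (∃ x : Fin n → ℝ, A.mulVec x = b) ↔
      (∃ x : Fin n → ℝ, (∀ j, j ∉ J → x j = 0) ∧ ∀ i, i ∈ I → A.mulVec x i = b i) := by
  constructor
  · rintro ⟨x, hx⟩
    classical
    refine ⟨fun j => if j ∈ J then x j else 0, fun j hj => by simp [hj], fun i hi => ?_⟩
    rw [← hx]
    unfold Matrix.mulVec dotProduct
    apply Finset.sum_congr rfl
    intro j _
    by_cases hj : j ∈ J
    · simp [hj]
    · have : A i j = 0 := by
        by_contra h
        exact hj (hIJ i j hi h)
      simp [this]
  · rintro ⟨x, hx0, hx⟩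
    refine ⟨x, funext fun i => ?_⟩
    by_cases hi : i ∈ I
    · exact hx i hi
    · have hb : b i = 0 := by
        by_contra h
        exact hi (hI i h)
      rw [hb]
      unfold Matrix.mulVec dotProduct
      apply Finset.sum_eq_zero
      intro j _
      by_cases hj : j ∈ J
      · have : A i j = 0 := by
        -- if A i j ≠ 0 then i ∈ I
          by_contra h
          exact hi (hJI i j hj h)
        simp [this]
      · simp [hx0 j hj]
end

section
/- Let A be an n×n real matrix and b ∈ ℝⁿ, and define the reachability sets I = {i | inl i ∈ reach(B)} and J = {j | inr j ∈ reach(B)} with B = {inl h | b h ≠ 0}. If the system A x = b has a solution, then there exists a solution x with A.mulVec x = b whose support is contained in J, i.e. x j = 0 for all j ∉ J. -/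
/-- The symmetric step relation of the bipartite graph of a matrix `A`:
row node `inl i` is related to column node `inr j` exactly when `A i j ≠ 0`. -/
def bipStep {n : ℕ} (A : Matrix (Fin n) (Fin n) ℝ) :
    (Fin n ⊕ Fin n) → (Fin n ⊕ Fin n) → Prop
  | Sum.inl i, Sum.inr j => A i j ≠ 0
  | Sum.inr j, Sum.inl i => A i j ≠ 0
  | _, _ => False

/-- Reachability from the set `B = {inl h | b h ≠ 0}` in the bipartite graph of `A`. -/
def bipReach {n : ℕ} (A : Matrix (Fin n) (Fin n) ℝ) (b : Fin n → ℝ)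
    (u : Fin n ⊕ Fin n) : Prop :=
  ∃ h : Fin n, b h ≠ 0 ∧ Relation.ReflTransGen (bipStep A) (Sum.inl h) u

theorem stmt_5 {n : ℕ} (A : Matrix (Fin n) (Fin n) ℝ) (b : Fin n → ℝ)
    (J : Set (Fin n))
    (hJdef : J = {j | bipReach A b (Sum.inr j)})
    (hsol : ∃ x : Fin n → ℝ, A.mulVec x = b) :
    ∃ x : Fin n → ℝ, A.mulVec x = b ∧ ∀ j, j ∉ J → x j = 0 := by
  classical
  obtain ⟨x, hx⟩ := hsol
  refine ⟨fun j => if j ∈ J then x j else 0, ?_, ?_⟩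
  · funext i
    by_cases hi : bipReach A b (Sum.inl i)
    · have h1 : (A.mulVec (fun j => if j ∈ J then x j else 0)) i = (A.mulVec x) i := by
        simp only [Matrix.mulVec, dotProduct]
        apply Finset.sum_congr rfl
        intro j _
        by_cases hj : j ∈ J
        · simp [hj]
        · have hAij : A i j = 0 := by
            by_contra hA
            apply hj
            rw [hJdef]
            obtain ⟨h, hb, hrt⟩ := hi
            exact ⟨h, hb, hrt.tail (show bipStep A (Sum.inl i) (Sum.inr j) from hA)⟩
          simp [hAij]
      rw [h1, hx]
    · have hbi : b i = 0 := by
        by_contra hb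
        exact hi ⟨i, hb, Relation.ReflTransGen.refl⟩
      have h0 : (A.mulVec (fun j => if j ∈ J then x j else 0)) i = 0 := by
        simp only [Matrix.mulVec, dotProduct]
        apply Finset.sum_eq_zero
        intro j _
        by_cases hj : j ∈ J
        · have hAij : A i j = 0 := by
            by_contra hA
            apply hi
            rw [hJdef] at hj
            obtain ⟨h, hb, hrt⟩ := hj
            exact ⟨h, hb, hrt.tail (show bipStep A (Sum.inr j) (Sum.inl i) from hA)⟩
          simp [hAij]
        · simp [hj]
      rw [h0, hbi]
  · intro j hj; simp [hj]
end

section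
/- Let A be an n×n real matrix with det A ≠ 0 and b ∈ ℝⁿ, and define the reachability sets I = {i | inl i ∈ reach(B)} and J = {j | inr j ∈ reach(B)} with B = {inl h | b h ≠ 0}. Then there is a unique vector x ∈ ℝⁿ with x j = 0 for all j ∉ J and (A.mulVec x) i = b i for all i ∈ I; equivalently, the projected system A_{I,J} y = b_I has a unique solution. -/
theorem stmt_6 {n : ℕ} (A : Matrix (Fin n) (Fin n) ℝ) (hA : A.det ≠ 0) (b : Fin n → ℝ)
    (I J : Set (Fin n))
    (hIdef : I = {i | bipReach A b (Sum.inl i)})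
    (hJdef : J = {j | bipReach A b (Sum.inr j)}) :
    ∃! x : Fin n → ℝ, (∀ j, j ∉ J → x j = 0) ∧ ∀ i, i ∈ I → A.mulVec x i = b i := by
  classical
  have hu : IsUnit A.det := isUnit_iff_ne_zero.mpr hA
  have hbI : ∀ i, b i ≠ 0 → i ∈ I := fun i hi =>
    hIdef ▸ ⟨i, hi, Relation.ReflTransGen.refl⟩
  have hIJ : ∀ i j, i ∈ I → A i j ≠ 0 → j ∈ J := by
    intro i j hi hij
    rw [hIdef] at hi; rw [hJdef]
    obtain ⟨h, hb, hr⟩ := hi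
    exact ⟨h, hb, hr.tail (show bipStep A (Sum.inl i) (Sum.inr j) from hij)⟩
  have hJI : ∀ i j, j ∈ J → A i j ≠ 0 → i ∈ I := by
    intro i j hj hij
    rw [hJdef] at hj; rw [hIdef]
    obtain ⟨h, hb, hr⟩ := hj
    exact ⟨h, hb, hr.tail (show bipStep A (Sum.inr j) (Sum.inl i) from hij)⟩
  have hA1 : ∀ i j, i ∈ I → j ∉ J → A i j = 0 := by
    intro i j hi hj; by_contra h; exact hj (hIJ i j hi h)
  have hA2 : ∀ i j, i ∉ I → j ∈ J → A i j = 0 := by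
    intro i j hi hj; by_contra h; exact hi (hJI i j hj h)
  have hb0 : ∀ i, i ∉ I → b i = 0 := by
    intro i hi; by_contra h; exact hi (hbI i h)
  set x0 := A⁻¹.mulVec b with hx0
  have hAx0 : A.mulVec x0 = b := by
    rw [hx0, Matrix.mulVec_mulVec, Matrix.mul_nonsing_inv A hu, Matrix.one_mulVec]
  have hinj : ∀ y, A.mulVec y = b → y = x0 := by
    intro y hy
    have h2 := congrArg (fun v => A⁻¹.mulVec v) hy
    simpa [Matrix.mulVec_mulVec, Matrix.nonsing_inv_mul A hu,
      Matrix.one_mulVec, hx0] using h2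
  set x : Fin n → ℝ := fun j => if j ∈ J then x0 j else 0 with hxdef
  have hAx : A.mulVec x = b := by
    funext i
    by_cases hi : i ∈ I
    · have heq : A.mulVec x i = A.mulVec x0 i := by
        simp only [Matrix.mulVec, dotProduct]
        refine Finset.sum_congr rfl fun j _ => ?_
        by_cases hj : j ∈ J
        · simp [hxdef, hj]
        · simp [hxdef, hj, hA1 i j hi hj]
      rw [heq, hAx0]
    · rw [hb0 i hi]
      simp only [Matrix.mulVec, dotProduct]
      refine Finset.sum_eq_zero fun j _ => ?_
      by_cases hj : j ∈ J
      · simp [hA2 i j hi hj]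
      · simp [hxdef, hj]
  refine ⟨x, ⟨fun j hj => by simp [hxdef, hj], fun i _ => by rw [hAx]⟩, ?_⟩
  rintro y ⟨hy1, hy2⟩
  have hAy : A.mulVec y = b := by
    funext i
    by_cases hi : i ∈ I
    · exact hy2 i hi
    · rw [hb0 i hi]
      simp only [Matrix.mulVec, dotProduct]
      refine Finset.sum_eq_zero fun j _ => ?_
      by_cases hj : j ∈ J
      · simp [hA2 i j hi hj]
      · simp [hy1 j hj]
  rw [hinj y hAy, hinj x hAx]
end

section
/- Let A be an n×n real matrix with det A ≠ 0 and b ∈ ℝⁿ, and define the reachability sets I = {i | inl i ∈ reach(B)} and J = {j | inr j ∈ reach(B)} with B = {inl h | b h ≠ 0}. Then I and J have the same cardinality. -/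
open Module in
lemma aux_card_le {n : ℕ} (A : Matrix (Fin n) (Fin n) ℝ) (hA : A.det ≠ 0)
    (S T : Set (Fin n)) (h : ∀ i ∈ S, ∀ j, j ∉ T → A i j = 0) :
    S.ncard ≤ T.ncard := by
  classical
  have hU : IsUnit A := (Matrix.isUnit_iff_isUnit_det A).2 (isUnit_iff_ne_zero.2 hA)
  have hrows : LinearIndependent ℝ (fun i => A i) :=
    Matrix.linearIndependent_rows_iff_isUnit.2 hU
  have hS : LinearIndependent ℝ (fun i : S => A i) :=
    hrows.comp _ Subtype.coe_injective
  set e : Basis (Fin n) ℝ (Fin n → ℝ) := Pi.basisFun ℝ (Fin n)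
  have hT : LinearIndependent ℝ (fun j : T => e j) :=
    e.linearIndependent.comp _ Subtype.coe_injective
  have hle : Submodule.span ℝ (Set.range fun i : S => A i) ≤
      Submodule.span ℝ (Set.range fun j : T => e j) := by
    rw [Submodule.span_le]
    rintro _ ⟨i, rfl⟩
    have : A i = ∑ j : Fin n, A i j • e j := by
      funext k
      simp [e, Pi.basisFun_apply, Pi.single_apply]
    show A (i : Fin n) ∈ _
    rw [this]
    refine Submodule.sum_mem _ fun j _ => ?_
    by_cases hj : j ∈ T
    · exact Submodule.smul_mem _ _ (Submodule.subset_span ⟨⟨j, hj⟩, rfl⟩)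
    · rw [h i i.2 j hj, zero_smul]; exact Submodule.zero_mem _
  have h1 := finrank_span_eq_card hS
  have h2 := finrank_span_eq_card hT
  have h3 := Submodule.finrank_mono hle
  rw [h1, h2] at h3
  rwa [← Nat.card_coe_set_eq, ← Nat.card_coe_set_eq, Nat.card_eq_fintype_card,
    Nat.card_eq_fintype_card]

theorem stmt_7 {n : ℕ} (A : Matrix (Fin n) (Fin n) ℝ) (hA : A.det ≠ 0) (b : Fin n → ℝ)
    (I J : Set (Fin n))
    (hIdef : I = {i | bipReach A b (Sum.inl i)})
    (hJdef : J = {j | bipReach A b (Sum.inr j)}) :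
    I.ncard = J.ncard := by
  have hIJ : ∀ i ∈ I, ∀ j, j ∉ J → A i j = 0 := by
    intro i hi j hj
    by_contra hne
    apply hj
    rw [hIdef] at hi
    obtain ⟨h, hb, hr⟩ := hi
    rw [hJdef]
    exact ⟨h, hb, hr.tail hne⟩
  have hJI : ∀ j ∈ J, ∀ i, i ∉ I → A.transpose j i = 0 := by
    intro j hj i hi
    by_contra hne
    apply hi
    rw [hJdef] at hj
    obtain ⟨h, hb, hr⟩ := hj
    rw [hIdef]
    exact ⟨h, hb, hr.tail (by simpa [Matrix.transpose_apply, bipStep] using hne)⟩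
  have hAT : A.transpose.det ≠ 0 := by rwa [Matrix.det_transpose]
  exact le_antisymm (aux_card_le A hA I J hIJ) (aux_card_le A.transpose hAT J I hJI)
end

section
/- Let A be an n×n real matrix with det A ≠ 0 and b ∈ ℝⁿ, and define the reachability sets I = {i | inl i ∈ reach(B)} and J = {j | inr j ∈ reach(B)} with B = {inl h | b h ≠ 0}. Then the projected matrix A_{I,J} is nonsingular: if x ∈ ℝⁿ satisfies x j = 0 for all j ∉ J and (A.mulVec x) i = 0 for all i ∈ I, then x = 0. -/
theorem stmt_8 {n : ℕ} (A : Matrix (Fin n) (Fin n) ℝ) (hA : A.det ≠ 0) (b : Fin n → ℝ)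
    (I J : Set (Fin n))
    (hIdef : I = {i | bipReach A b (Sum.inl i)})
    (hJdef : J = {j | bipReach A b (Sum.inr j)}) :
    ∀ x : Fin n → ℝ, (∀ j, j ∉ J → x j = 0) → (∀ i, i ∈ I → A.mulVec x i = 0) →
      x = 0 := by
  intro x hxJ hAxI
  have hAx : A.mulVec x = 0 := by
    funext i
    by_cases hi : i ∈ I
    · exact hAxI i hi
    · have hzero : ∀ j, A i j * x j = 0 := by
        intro j
        by_cases hj : j ∈ J
        · have hAij : A i j = 0 := by
            by_contra hne
            apply hi
            rw [hIdef]
            rw [hJdef] at hj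
            obtain ⟨h, hb, hr⟩ := hj
            exact ⟨h, hb, hr.tail hne⟩
          simp [hAij]
        · simp [hxJ j hj]
      simp only [Matrix.mulVec, dotProduct, Pi.zero_apply]
      exact Finset.sum_eq_zero fun j _ => hzero j
  exact Matrix.eq_zero_of_mulVec_eq_zero hA hAx
end
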